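/- arXiv:2004.14650 — 13 statements merged into one kernel-verified Lean document; each statement's English description precedes it below -/
import Mathlib

section
/- Let d be a metric on a finite set E and define f(S) = Σ_{ {u,v} ⊆ S } d(u,v). Then for any two disjoint finite sets A, B ⊆ E with |A| = a and |B| = b, we have Σ_{e ∈ B} (f(A ∪ {e}) − f(A)) ≥ (a / (a + b − 1)) · (f(A ∪ B) − f(A)). -/
open Finset

theorem stmt_0 {E : Type*} [Fintype E] [DecidableEq E]
    (d : E → E → ℝ)
    (hnn : ∀ u v, 0 ≤ d u v)
    (hsymm : ∀ u v, d u v = d v u)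
    (hself : ∀ u, d u u = 0)
    (htri : ∀ u v w, d u w ≤ d u v + d v w)
    (f : Finset E → ℝ)
    (hf : ∀ S : Finset E, f S = (∑ u ∈ S, ∑ v ∈ S, d u v) / 2)
    (A B : Finset E) (a b : ℕ)
    (hdisj : Disjoint A B) (ha : A.card = a) (hb : B.card = b)
    (ha1 : 1 ≤ a) (hb1 : 1 ≤ b) :
    ∑ e ∈ B, (f (insert e A) - f A) ≥
      ((a : ℝ) / ((a : ℝ) + b - 1)) * (f (A ∪ B) - f A) := by
  have haR : (1:ℝ) ≤ (a:ℝ) := by exact_mod_cast ha1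
  have hbR : (1:ℝ) ≤ (b:ℝ) := by exact_mod_cast hb1
  have hab : (0:ℝ) < (a:ℝ) + b - 1 := by linarith
  set S : ℝ := ∑ v ∈ B, ∑ u ∈ A, d v u with hS
  set sB : ℝ := ∑ v ∈ B, ∑ w ∈ B, d v w with hsB
  -- LHS = S
  have hLHS : ∑ e ∈ B, (f (insert e A) - f A) = S := by
    apply Finset.sum_congr rfl
    intro e he
    have heA : e ∉ A := fun h => (Finset.disjoint_left.mp hdisj h he)
    rw [hf, hf, Finset.sum_insert heA]
    have h1 : ∑ v ∈ insert e A, d e v = d e e + ∑ v ∈ A, d e v :=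
      Finset.sum_insert heA
    have h2 : ∑ u ∈ A, ∑ v ∈ insert e A, d u v
        = ∑ u ∈ A, (d u e + ∑ v ∈ A, d u v) :=
      Finset.sum_congr rfl (fun u _ => Finset.sum_insert heA)
    rw [h1, h2, hself, Finset.sum_add_distrib]
    have h3 : ∑ u ∈ A, d u e = ∑ u ∈ A, d e u :=
      Finset.sum_congr rfl (fun u _ => hsymm u e)
    rw [h3]
    ring
  -- f (A ∪ B) - f A = S + sB / 2
  have hcross : ∑ u ∈ A, ∑ v ∈ B, d u v = S := by
    rw [hS, Finset.sum_comm]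
    exact Finset.sum_congr rfl (fun v _ => Finset.sum_congr rfl (fun u _ => hsymm u v))
  have hRHS : f (A ∪ B) - f A = S + sB / 2 := by
    rw [hf, hf]
    rw [Finset.sum_union hdisj]
    have h4 : ∑ u ∈ A, ∑ v ∈ A ∪ B, d u v
        = ∑ u ∈ A, (∑ v ∈ A, d u v + ∑ v ∈ B, d u v) :=
      Finset.sum_congr rfl (fun u _ => Finset.sum_union hdisj)
    have h5 : ∑ u ∈ B, ∑ v ∈ A ∪ B, d u v
        = ∑ u ∈ B, (∑ v ∈ A, d u v + ∑ v ∈ B, d u v) :=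
      Finset.sum_congr rfl (fun u _ => Finset.sum_union hdisj)
    rw [h4, h5, Finset.sum_add_distrib, Finset.sum_add_distrib, hcross]
    rw [← hS, ← hsB]
    ring
  -- key inequality : a * sB ≤ 2 * (b - 1) * S
  have hkey : (a:ℝ) * sB ≤ 2 * ((b:ℝ) - 1) * S := by
    have hb1R : ∀ v ∈ B, ((B.erase v).card : ℝ) = (b:ℝ) - 1 := by
      intro v hv
      rw [Finset.card_erase_of_mem hv, hb]
      push_cast [hb1]
      ring
    have step1 : sB = ∑ v ∈ B, ∑ w ∈ B.erase v, d v w := by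
      apply Finset.sum_congr rfl
      intro v hv
      rw [← Finset.sum_erase_add _ _ hv, hself, add_zero]
    have step2 : ∀ v ∈ B, ∀ w ∈ B.erase v,
        (a:ℝ) * d v w ≤ ∑ u ∈ A, (d v u + d u w) := by
      intro v _ w _
      calc (a:ℝ) * d v w = ∑ _u ∈ A, d v w := by
            rw [Finset.sum_const, ha, nsmul_eq_mul]
        _ ≤ ∑ u ∈ A, (d v u + d u w) :=
            Finset.sum_le_sum (fun u _ => htri v u w)
    have main : (a:ℝ) * sB ≤ ∑ v ∈ B, ∑ w ∈ B.erase v, ∑ u ∈ A, (d v u + d u w) := by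
      rw [step1, Finset.mul_sum]
      apply Finset.sum_le_sum
      intro v hv
      rw [Finset.mul_sum]
      exact Finset.sum_le_sum (step2 v hv)
    have split : ∑ v ∈ B, ∑ w ∈ B.erase v, ∑ u ∈ A, (d v u + d u w)
        = ((b:ℝ) - 1) * S + ((b:ℝ) - 1) * S := by
      have e1 : ∀ v ∈ B, ∑ w ∈ B.erase v, ∑ u ∈ A, (d v u + d u w)
          = ((b:ℝ) - 1) * (∑ u ∈ A, d v u) + ∑ w ∈ B.erase v, ∑ u ∈ A, d u w := by
        intro v hv
        rw [show (∑ w ∈ B.erase v, ∑ u ∈ A, (d v u + d u w))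
            = ∑ w ∈ B.erase v, ((∑ u ∈ A, d v u) + ∑ u ∈ A, d u w) from
            Finset.sum_congr rfl (fun w _ => Finset.sum_add_distrib),
          Finset.sum_add_distrib, Finset.sum_const, nsmul_eq_mul, hb1R v hv]
      rw [Finset.sum_congr rfl e1, Finset.sum_add_distrib, ← Finset.mul_sum, ← hS]
      congr 1
      -- second part: ∑ v ∈ B, ∑ w ∈ B.erase v, g w = (b-1) * S
      have e2 : ∀ v ∈ B, ∑ w ∈ B.erase v, ∑ u ∈ A, d u w
          = (∑ w ∈ B, ∑ u ∈ A, d u w) - ∑ u ∈ A, d u v := by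
        intro v hv
        rw [← Finset.sum_erase_add _ _ hv]
        ring
      rw [Finset.sum_congr rfl e2, Finset.sum_sub_distrib, Finset.sum_const, nsmul_eq_mul, hb]
      have e3 : ∑ w ∈ B, ∑ u ∈ A, d u w = S := by
        rw [hS]
        exact Finset.sum_congr rfl (fun w _ =>
          Finset.sum_congr rfl (fun u _ => (hsymm w u).symm))
      rw [e3]
      ring
    linarith [main, split.le, split.ge]
  rw [hLHS, hRHS, ge_iff_le, div_mul_eq_mul_div, div_le_iff₀ hab]
  nlinarith [hkey]
end

section
/- Let d be a metric on a finite set E and f(S) = Σ_{ {u,v} ⊆ S } d(u,v). For disjoint sets A, B with |A| = a and |B| = b, it holds that a · f(B) ≤ (b − 1) · d(A,B), where d(A,B) = Σ_{u∈A, v∈B} d(u,v). -/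
open Finset

theorem stmt_1 {E : Type*} [Fintype E] [DecidableEq E]
    (d : E → E → ℝ)
    (hnn : ∀ u v, 0 ≤ d u v)
    (hsymm : ∀ u v, d u v = d v u)
    (hself : ∀ u, d u u = 0)
    (htri : ∀ u v w, d u w ≤ d u v + d v w)
    (f : Finset E → ℝ)
    (hf : ∀ S : Finset E, f S = (∑ u ∈ S, ∑ v ∈ S, d u v) / 2)
    (A B : Finset E) (a b : ℕ)
    (hdisj : Disjoint A B) (ha : A.card = a) (hb : B.card = b)
    (ha1 : 1 ≤ a) (hb1 : 1 ≤ b) :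
    (a : ℝ) * f B ≤ ((b : ℝ) - 1) * (∑ u ∈ A, ∑ v ∈ B, d u v) := by
  subst ha hb
  rw [hf]
  set D := ∑ u ∈ A, ∑ v ∈ B, d u v with hD
  set g : E → ℝ := fun u => ∑ x ∈ A, d x u with hg
  have hDg : D = ∑ u ∈ B, g u := by rw [hD, Finset.sum_comm]
  -- step 1: a * inner sum ≤ triple sum
  have key : ∀ u ∈ B, (A.card : ℝ) * ∑ v ∈ B, d u v
      ≤ ∑ v ∈ B.erase u, ∑ x ∈ A, (d x u + d x v) := by
    intro u hu
    have h1 : ∑ v ∈ B, d u v = ∑ v ∈ B.erase u, d u v :=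
      (Finset.sum_erase _ (hself u)).symm
    rw [h1, Finset.mul_sum]
    refine Finset.sum_le_sum fun v hv => ?_
    have : ∀ x ∈ A, d u v ≤ d x u + d x v := by
      intro x hx
      calc d u v ≤ d u x + d x v := htri u x v
        _ = d x u + d x v := by rw [hsymm u x]
    calc (A.card : ℝ) * d u v = ∑ _x ∈ A, d u v := by
          rw [Finset.sum_const, nsmul_eq_mul]
      _ ≤ ∑ x ∈ A, (d x u + d x v) := Finset.sum_le_sum this
  -- step 2: triple sum equals 2 (b-1) D
  have hT : ∑ u ∈ B, ∑ v ∈ B.erase u, ∑ x ∈ A, (d x u + d x v)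
      = 2 * ((B.card : ℝ) - 1) * D := by
    have hinner : ∀ u ∈ B, ∑ v ∈ B.erase u, ∑ x ∈ A, (d x u + d x v)
        = ((B.card : ℝ) - 1) * g u + ((∑ v ∈ B, g v) - g u) := by
      intro u hu
      have : ∀ v, (∑ x ∈ A, (d x u + d x v)) = g u + g v := by
        intro v; rw [Finset.sum_add_distrib]
      simp only [this]
      rw [Finset.sum_add_distrib, Finset.sum_const, nsmul_eq_mul,
        Finset.card_erase_of_mem hu, Finset.sum_erase_eq_sub hu]
      have hb' : 1 ≤ B.card := Finset.card_pos.mpr ⟨u, hu⟩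
      rw [Nat.cast_sub hb', Nat.cast_one]
    rw [Finset.sum_congr rfl hinner, Finset.sum_add_distrib, ← Finset.mul_sum,
      Finset.sum_sub_distrib, Finset.sum_const, nsmul_eq_mul, hDg]
    ring
  calc (A.card : ℝ) * ((∑ u ∈ B, ∑ v ∈ B, d u v) / 2)
      = (∑ u ∈ B, (A.card : ℝ) * ∑ v ∈ B, d u v) / 2 := by
        rw [← Finset.mul_sum]; ring
    _ ≤ (∑ u ∈ B, ∑ v ∈ B.erase u, ∑ x ∈ A, (d x u + d x v)) / 2 := by
        have := Finset.sum_le_sum key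
        linarith
    _ = ((B.card : ℝ) - 1) * D := by rw [hT]; ring
end

section
/- Let f : 2^E → ℝ≥0 be proportionally submodular. Then for any set A ⊆ E of size a ≥ 1 and distinct elements e, e' ∈ E \ A, we have f(A ∪ {e',e}) − f(A ∪ {e'}) ≤ (1/a)·(f(A ∪ {e'}) − f(A)) + (1 + 1/a)·(f(A ∪ {e}) − f(A)). -/
open Finset

/-- `f` is proportionally submodular. -/
def PropSubmodular {E : Type*} [DecidableEq E] (f : Finset E → ℝ) : Prop :=
  ∀ S T : Finset E,
    (S.card : ℝ) * f T + (T.card : ℝ) * f S ≥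
      ((S ∩ T).card : ℝ) * f (S ∪ T) + ((S ∪ T).card : ℝ) * f (S ∩ T)

theorem stmt_2 {E : Type*} [Fintype E] [DecidableEq E]
    (f : Finset E → ℝ) (hnn : ∀ S, 0 ≤ f S) (hps : PropSubmodular f)
    (A : Finset E) (a : ℕ) (ha : A.card = a) (ha1 : 1 ≤ a)
    (e e' : E) (hee' : e ≠ e') (he : e ∉ A) (he' : e' ∉ A) :
    f (insert e (insert e' A)) - f (insert e' A) ≤
      (1 / (a : ℝ)) * (f (insert e' A) - f A)
        + (1 + 1 / (a : ℝ)) * (f (insert e A) - f A) := by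
  have hU : insert e A ∪ insert e' A = insert e (insert e' A) := by
    ext x; simp; tauto
  have hI : insert e A ∩ insert e' A = A := by
    ext x
    simp only [mem_inter, mem_insert]
    constructor
    · rintro ⟨h1 | h1, h2 | h2⟩ <;> first | assumption | (exfalso; exact hee' (h1 ▸ h2))
    · intro hx; exact ⟨Or.inr hx, Or.inr hx⟩
  have hcS : (insert e A).card = a + 1 := by rw [card_insert_of_notMem he, ha]
  have hcT : (insert e' A).card = a + 1 := by rw [card_insert_of_notMem he', ha]
  have heT : e ∉ insert e' A := by simp [hee', he]
  have hcU : (insert e (insert e' A)).card = a + 2 := by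
    rw [card_insert_of_notMem heT, hcT]
  have key := hps (insert e A) (insert e' A)
  rw [hU, hI, hcS, hcT, ha, hcU] at key
  have hpos : (0:ℝ) < (a:ℝ) := by exact_mod_cast ha1
  have hne : (a:ℝ) ≠ 0 := ne_of_gt hpos
  push_cast at key
  rw [ge_iff_le] at key
  have hrw : 1 / (a:ℝ) * (f (insert e' A) - f A) + (1 + 1 / (a:ℝ)) * (f (insert e A) - f A)
      = ((f (insert e' A) - f A) + ((a:ℝ)+1) * (f (insert e A) - f A)) / a := by
    field_simp
  rw [hrw, le_div_iff₀ hpos]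
  nlinarith [key]
end

section
/- Let f : 2^E → ℝ≥0 be proportionally submodular. For any set A with |A| = a ≥ 1 and distinct elements e, e_1, …, e_b ∈ E \ A, the marginal gain satisfies f_{A ∪ {e_1,…,e_b}}(e) ≤ ((a+b)/a)·f_A(e) + ((a+b)/(a(a+1)))·Σ_{i=1}^b f_A(e_i), where f_S(x) = f(S ∪ {x}) − f(S). -/
open Finset

/-!
Proportional submodularity applied to `S ∪ {x}` and `S ∪ {y}` gives
`|S| · f_{S ∪ {y}}(x) ≤ (|S| + 1) · f_S(x) + f_S(y)`: adding one element to `S` raises marginal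
gains by a controlled amount. Adding the elements of `B` to `A` one at a time and inducting on `|B|`
proves the theorem, provided the inductive step averages this one-element bound over every choice
of the last element `y ∈ B`; for a single fixed `y` the gain `f_A(y)` gets the wrong weight.
-/

section

variable {E : Type*} [DecidableEq E]

def marginal (f : Finset E → ℝ) (S : Finset E) (x : E) : ℝ := f (insert x S) - f S

/-- The bound of the theorem with its denominator `|A| (|A| + 1)` cleared. -/
def MarginalBound (f : Finset E → ℝ) (A B : Finset E) (x : E) : Prop :=
  #A * (#A + 1) * marginal f (A ∪ B) x ≤
    (#A + #B) * ((#A + 1) * marginal f A x + ∑ z ∈ B, marginal f A z)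

namespace PropSubmodular

variable {f : Finset E → ℝ}

theorem card_mul_marginal_insert_le (hf : PropSubmodular f) {S : Finset E} {x y : E}
    (hx : x ∉ S) (hy : y ∉ S) (hxy : x ≠ y) :
    #S * marginal f (insert y S) x ≤ (#S + 1) * marginal f S x + marginal f S y := by
  have hxyS : x ∉ insert y S := by simp [hxy, hx]
  have hinter : insert x S ∩ insert y S = S := by
    rw [insert_inter_of_notMem hxyS, inter_eq_left.mpr (subset_insert y S)]
  have hunion : insert x S ∪ insert y S = insert x (insert y S) := by
    rw [insert_union, union_eq_right.mpr (subset_insert y S)]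
  have h := hf (insert x S) (insert y S)
  rw [hinter, hunion, card_insert_of_notMem hx, card_insert_of_notMem hy,
    card_insert_of_notMem hxyS, card_insert_of_notMem hy] at h
  simp only [marginal]
  push_cast at h
  linarith

theorem marginalBound_insert_le (hf : PropSubmodular f) {A B : Finset E} {e y : E}
    (hA : A.Nonempty) (heA : e ∉ A) (heB : e ∉ B) (hyA : y ∉ A) (hyB : y ∉ B) (hey : e ≠ y)
    (hAB : Disjoint A B) (ihe : MarginalBound f A B e) (ihy : MarginalBound f A B y) :
    #A * (#A + 1) * marginal f (A ∪ insert y B) e ≤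
      (#A + #B + 1) * (#A + 1) * marginal f A e + (#A + #B + 2) * ∑ z ∈ B, marginal f A z
        + (#A + 1) * marginal f A y := by
  have hstep := hf.card_mul_marginal_insert_le (S := A ∪ B)
    (by simp [heA, heB]) (by simp [hyA, hyB]) hey
  rw [card_union_of_disjoint hAB] at hstep
  rw [union_insert]
  unfold MarginalBound at ihe ihy
  have hm : (0 : ℝ) < #A := by exact_mod_cast hA.card_pos
  have hmn : (0 : ℝ) < #A + #B := by positivity
  have hm1 : (0 : ℝ) ≤ #A + #B + 1 := by positivity
  refine le_of_mul_le_mul_left ?_ hmn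
  push_cast at hstep
  nlinarith [mul_le_mul_of_nonneg_left hstep (by positivity : (0 : ℝ) ≤ #A * (#A + 1)),
    mul_le_mul_of_nonneg_left ihe hm1]

theorem marginalBound (hf : PropSubmodular f) {A : Finset E} (hA : A.Nonempty) (B : Finset E) :
    Disjoint A B → ∀ e ∉ A, e ∉ B → MarginalBound f A B e := by
  induction B using Finset.strongInduction with
  | H B ih =>
  intro hAB e heA heB
  rcases B.eq_empty_or_nonempty with rfl | hB
  · simp [MarginalBound, mul_assoc]
  have hstep : ∀ y ∈ B, #A * (#A + 1) * marginal f (A ∪ B) e ≤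
      (#A + #B) * (#A + 1) * marginal f A e
        + (#A + #B + 1) * (∑ z ∈ B, marginal f A z - marginal f A y)
        + (#A + 1) * marginal f A y := by
    intro y hy
    have hAB' : Disjoint A (B.erase y) := hAB.mono_right (erase_subset y B)
    have heB' : e ∉ B.erase y := fun h => heB (mem_of_mem_erase h)
    have hyA : y ∉ A := disjoint_right.mp hAB hy
    have ih' := ih (B.erase y) (erase_ssubset hy) hAB'
    have h := hf.marginalBound_insert_le hA heA heB' hyA (notMem_erase y B)
      (fun h => heB (h ▸ hy)) hAB' (ih' e heA heB') (ih' y hyA (notMem_erase y B))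
    rw [insert_erase hy, sum_erase_eq_sub hy] at h
    have hcard : (#(B.erase y) : ℝ) = #B - 1 := by
      rw [eq_sub_iff_add_eq]; exact_mod_cast card_erase_add_one hy
    rw [hcard] at h
    exact h.trans_eq (by ring)
  have hsum := sum_le_sum hstep
  rw [sum_const, nsmul_eq_mul, sum_add_distrib, sum_add_distrib, sum_const, nsmul_eq_mul,
    ← mul_sum, ← mul_sum, sum_sub_distrib, sum_const, nsmul_eq_mul] at hsum
  have hb : (0 : ℝ) < #B := by exact_mod_cast hB.card_pos
  refine le_of_mul_le_mul_left ?_ hb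
  linarith

end PropSubmodular

end

theorem stmt_3_general {E : Type*} [DecidableEq E]
    (f : Finset E → ℝ) (hps : PropSubmodular f)
    (A B : Finset E) (a b : ℕ) (ha : A.card = a) (hb : B.card = b)
    (ha1 : 1 ≤ a)
    (hAB : Disjoint A B) (e : E) (heA : e ∉ A) (heB : e ∉ B) :
    f (insert e (A ∪ B)) - f (A ∪ B) ≤
      (((a : ℝ) + b) / a) * (f (insert e A) - f A)
        + (((a : ℝ) + b) / ((a : ℝ) * ((a : ℝ) + 1)))
            * ∑ x ∈ B, (f (insert x A) - f A) := by
  subst ha hb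
  have hA : A.Nonempty := card_pos.mp ha1
  have hbound := hps.marginalBound hA B hAB e heA heB
  have hm : (0 : ℝ) < #A := by exact_mod_cast ha1
  change marginal f (A ∪ B) e ≤ _
  rw [show ((#A : ℝ) + #B) / #A * (f (insert e A) - f A)
        + ((#A : ℝ) + #B) / (#A * (#A + 1)) * ∑ x ∈ B, (f (insert x A) - f A)
      = (#A + #B) * ((#A + 1) * marginal f A e + ∑ z ∈ B, marginal f A z) / (#A * (#A + 1))
      by simp only [marginal]; field_simp,
    le_div_iff₀ (by positivity)]
  rw [mul_comm]
  exact hbound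

theorem stmt_3 {E : Type*} [Fintype E] [DecidableEq E]
    (f : Finset E → ℝ) (hnn : ∀ S, 0 ≤ f S) (hps : PropSubmodular f)
    (A B : Finset E) (a b : ℕ) (ha : A.card = a) (hb : B.card = b)
    (ha1 : 1 ≤ a)
    (hAB : Disjoint A B) (e : E) (heA : e ∉ A) (heB : e ∉ B) :
    f (insert e (A ∪ B)) - f (A ∪ B) ≤
      (((a : ℝ) + b) / a) * (f (insert e A) - f A)
        + (((a : ℝ) + b) / ((a : ℝ) * ((a : ℝ) + 1)))
            * ∑ x ∈ B, (f (insert x A) - f A) :=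
  stmt_3_general f hps A B a b ha hb ha1 hAB e heA heB
end

section
/- Let f : 2^E → ℝ≥0 be proportionally submodular. Then for any two disjoint sets A, B ⊆ E with |A| = a ≥ 1 and |B| = b ≥ 1, Σ_{e ∈ B} (f(A ∪ {e}) − f(A)) ≥ (3a(1+a) / (3a² + 3ab + b² − 1)) · (f(A ∪ B) − f(A)). -/
/-!
Let `h k` be the average of `f (A ∪ X)` over the `k`-subsets `X ⊆ B`. Proportional
submodularity for `A ∪ Z ∪ {u}` and `A ∪ Z ∪ {v}`, averaged over all `j`-subsets `Z ⊆ B` and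
`u ≠ v` in `B \ Z`, gives the discrete concavity
`(a + j) h (j + 2) + (a + j + 2) h j ≤ 2 (a + j + 1) h (j + 1)`.
Hence the increment `h (j + 1) - h j` is at most `(a + j) (a + j + 1) / (a (a + 1))` times
`h 1 - h 0`. Summing over `j < b` bounds `h b - h 0 = f (A ∪ B) - f A` by
`(3a² + 3ab + b² - 1) / (3a (a + 1))` times `b (h 1 - h 0) = ∑ e ∈ B, (f (insert e A) - f A)`.
-/

open Finset

section Counting

variable {ι : Type*} [DecidableEq ι]

theorem sum_powersetCard_sum_sdiff_insert {M : Type*} [AddCommMonoid M] (B : Finset ι) (k : ℕ)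
    (g : Finset ι → M) :
    ∑ Z ∈ B.powersetCard k, ∑ u ∈ B \ Z, g (insert u Z) =
      (k + 1) • ∑ X ∈ B.powersetCard (k + 1), g X := by
  have hcount : (k + 1) • ∑ X ∈ B.powersetCard (k + 1), g X =
      ∑ X ∈ B.powersetCard (k + 1), ∑ _u ∈ X, g X := by
    rw [smul_sum]
    refine sum_congr rfl fun X hX => ?_
    rw [sum_const, (mem_powersetCard.mp hX).2]
  rw [hcount, sum_sigma', sum_sigma']
  refine sum_nbij' (fun p => ⟨insert p.2 p.1, p.2⟩) (fun q => ⟨q.1.erase q.2, q.2⟩)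
    ?_ ?_ ?_ ?_ fun _ _ => rfl
  · rintro ⟨Z, u⟩ hp
    simp only [mem_sigma, mem_powersetCard, mem_sdiff] at hp ⊢
    obtain ⟨⟨hZB, rfl⟩, huB, huZ⟩ := hp
    exact ⟨⟨insert_subset huB hZB, card_insert_of_notMem huZ⟩, mem_insert_self _ _⟩
  · rintro ⟨X, u⟩ hq
    simp only [mem_sigma, mem_powersetCard, mem_sdiff] at hq ⊢
    obtain ⟨⟨hXB, hXc⟩, hu⟩ := hq
    exact ⟨⟨(erase_subset _ _).trans hXB, by rw [card_erase_of_mem hu, hXc]; rfl⟩,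
      hXB hu, notMem_erase _ _⟩
  · rintro ⟨Z, u⟩ hp
    simp only [mem_sigma, mem_sdiff] at hp
    simp [erase_insert hp.2.2]
  · rintro ⟨X, u⟩ hq
    simp only [mem_sigma] at hq
    simp [insert_erase hq.2]

theorem sum_sum_erase_add {R : Type*} [CommRing R] (s : Finset ι) (φ : ι → R) :
    ∑ u ∈ s, ∑ v ∈ s.erase u, (φ u + φ v) = 2 * ((#s : R) - 1) * ∑ u ∈ s, φ u := by
  have hinner : ∀ u ∈ s, ∑ v ∈ s.erase u, (φ u + φ v) =
      ((#s : R) - 1) * φ u + (∑ v ∈ s, φ v - φ u) := by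
    intro u hu
    rw [sum_add_distrib, sum_const, card_erase_of_mem hu, nsmul_eq_mul,
      Nat.cast_pred (card_pos.2 ⟨u, hu⟩), sum_erase_eq_sub hu]
  rw [sum_congr rfl hinner, sum_add_distrib, sum_sub_distrib, ← mul_sum, sum_const,
    nsmul_eq_mul]
  ring

end Counting

theorem PropSubmodular.insert_insert_le {E : Type*} [DecidableEq E] {f : Finset E → ℝ}
    (hf : PropSubmodular f) {X : Finset E} {u v : E} (hu : u ∉ X) (hv : v ∉ X) (huv : u ≠ v) :
    #X * f (insert v (insert u X)) + (#X + 2) * f X ≤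
      (#X + 1) * (f (insert u X) + f (insert v X)) := by
  have h := hf (insert u X) (insert v X)
  have hinter : insert u X ∩ insert v X = X := by
    ext x
    simp only [mem_inter, mem_insert]
    grind
  have hunion : insert u X ∪ insert v X = insert v (insert u X) := by
    ext x
    simp only [mem_union, mem_insert]
    tauto
  have hvuX : v ∉ insert u X := by simp [huv.symm, hv]
  rw [hinter, hunion, card_insert_of_notMem hvuX, card_insert_of_notMem hu,
    card_insert_of_notMem hv] at h
  push_cast at h
  linarith

section Averages

variable {ι : Type*}

noncomputable def powersetCardAvg (B : Finset ι) (k : ℕ) (g : Finset ι → ℝ) : ℝ :=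
  (∑ X ∈ B.powersetCard k, g X) / (#B).choose k

variable (B : Finset ι) (g : Finset ι → ℝ)

theorem sum_powersetCard_eq_choose_mul_avg {k : ℕ} (hk : k ≤ #B) :
    ∑ X ∈ B.powersetCard k, g X = (#B).choose k * powersetCardAvg B k g := by
  rw [powersetCardAvg, mul_div_cancel₀]
  exact_mod_cast (Nat.choose_pos hk).ne'

theorem powersetCardAvg_zero : powersetCardAvg B 0 g = g ∅ := by
  simp [powersetCardAvg]

theorem powersetCardAvg_card : powersetCardAvg B #B g = g B := by
  simp [powersetCardAvg]

theorem card_mul_powersetCardAvg_one : #B * powersetCardAvg B 1 g = ∑ e ∈ B, g {e} := by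
  rw [powersetCardAvg, Nat.choose_one_right, powersetCard_one, sum_map]
  refine mul_div_cancel_of_imp' fun hB => ?_
  simp [card_eq_zero.mp (Nat.cast_eq_zero.mp hB)]

/-- Summing over all flags `Z ⊂ insert u Z ⊂ insert v (insert u Z)` in `B`, with `#Z = j`,
hits every `j`-, `(j + 1)`- and `(j + 2)`-subset of `B` equally often. -/
theorem sum_flags_le [DecidableEq ι] {j t : ℕ} (hB : #B = j + 2 + t) {α β γ : ℝ}
    (hle : ∀ Z ∈ B.powersetCard j, ∀ u ∈ B \ Z, ∀ v ∈ (B \ Z).erase u,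
      α * g (insert v (insert u Z)) + β * g Z ≤ γ * (g (insert u Z) + g (insert v Z))) :
    α * ((j + 1) * (j + 2) * ∑ X ∈ B.powersetCard (j + 2), g X) +
        β * ((t + 2) * (t + 1) * ∑ X ∈ B.powersetCard j, g X) ≤
      γ * (2 * (t + 1) * (j + 1) * ∑ X ∈ B.powersetCard (j + 1), g X) := by
  have hcard : ∀ Z ∈ B.powersetCard j, #(B \ Z) = t + 2 := fun Z hZ => by
    obtain ⟨hZB, hZc⟩ := mem_powersetCard.mp hZ
    rw [card_sdiff_of_subset hZB, hB, hZc]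
    omega
  have htop : ∑ Z ∈ B.powersetCard j, ∑ u ∈ B \ Z, ∑ v ∈ (B \ Z).erase u,
      g (insert v (insert u Z)) = (j + 1) * (j + 2) * ∑ X ∈ B.powersetCard (j + 2), g X := by
    simp only [← sdiff_insert]
    rw [sum_powersetCard_sum_sdiff_insert B j (fun X => ∑ v ∈ B \ X, g (insert v X)),
      sum_powersetCard_sum_sdiff_insert, smul_smul, nsmul_eq_mul]
    push_cast
    ring
  have hbot : ∑ Z ∈ B.powersetCard j, ∑ u ∈ B \ Z, ∑ v ∈ (B \ Z).erase u, g Z =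
      (t + 2) * (t + 1) * ∑ X ∈ B.powersetCard j, g X := by
    rw [mul_sum]
    refine sum_congr rfl fun Z hZ => ?_
    rw [sum_congr rfl fun u hu => by rw [sum_const, card_erase_of_mem hu, hcard Z hZ],
      sum_const, hcard Z hZ]
    simp only [nsmul_eq_mul]
    push_cast
    ring
  have hmid : ∑ Z ∈ B.powersetCard j, ∑ u ∈ B \ Z, ∑ v ∈ (B \ Z).erase u,
      (g (insert u Z) + g (insert v Z)) =
        2 * (t + 1) * (j + 1) * ∑ X ∈ B.powersetCard (j + 1), g X := by
    rw [sum_congr rfl fun Z hZ => by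
        rw [sum_sum_erase_add (B \ Z) fun u => g (insert u Z), hcard Z hZ],
      ← mul_sum, sum_powersetCard_sum_sdiff_insert, nsmul_eq_mul]
    push_cast
    ring
  calc _ = ∑ Z ∈ B.powersetCard j, ∑ u ∈ B \ Z, ∑ v ∈ (B \ Z).erase u,
          (α * g (insert v (insert u Z)) + β * g Z) := by
        simp only [← htop, ← hbot, mul_sum, sum_add_distrib]
    _ ≤ ∑ Z ∈ B.powersetCard j, ∑ u ∈ B \ Z, ∑ v ∈ (B \ Z).erase u,
          γ * (g (insert u Z) + g (insert v Z)) :=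
        sum_le_sum fun Z hZ => sum_le_sum fun u hu => sum_le_sum fun v hv => hle Z hZ u hu v hv
    _ = _ := by simp only [← hmid, mul_sum]

end Averages

theorem powersetCardAvg_flags_le {ι : Type*} [DecidableEq ι] (B : Finset ι)
    (g : Finset ι → ℝ) {j : ℕ} (hj : j + 2 ≤ #B) {α β γ : ℝ}
    (hle : ∀ Z ∈ B.powersetCard j, ∀ u ∈ B \ Z, ∀ v ∈ (B \ Z).erase u,
      α * g (insert v (insert u Z)) + β * g Z ≤ γ * (g (insert u Z) + g (insert v Z))) :
    α * powersetCardAvg B (j + 2) g + β * powersetCardAvg B j g ≤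
      2 * γ * powersetCardAvg B (j + 1) g := by
  obtain ⟨t, ht⟩ : ∃ t, #B = j + 2 + t := ⟨#B - (j + 2), by omega⟩
  have hsum := sum_flags_le B g ht hle
  rw [sum_powersetCard_eq_choose_mul_avg B g hj, sum_powersetCard_eq_choose_mul_avg B g (by omega),
    sum_powersetCard_eq_choose_mul_avg B g (by omega)] at hsum
  have e1 : ((#B).choose (j + 1) : ℝ) * (j + 1) = (#B).choose j * (t + 2) := by
    have := Nat.choose_succ_right_eq (#B) j
    rw [show #B - j = t + 2 by omega] at this
    exact_mod_cast this
  have e2 : ((#B).choose (j + 2) : ℝ) * (j + 2) = (#B).choose (j + 1) * (t + 1) := by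
    have := Nat.choose_succ_right_eq (#B) (j + 1)
    rw [show #B - (j + 1) = t + 1 by omega] at this
    exact_mod_cast this
  have hM : (0 : ℝ) < (#B).choose j * (t + 2) * (t + 1) := by
    have := Nat.choose_pos (n := #B) (k := j) (by omega)
    positivity
  refine le_of_mul_le_mul_left ?_ hM
  set h := fun k => powersetCardAvg B k g
  linear_combination hsum + (2 * γ * h (j + 1) - α * h (j + 2)) * (t + 1) * e1
    - α * h (j + 2) * (j + 1) * e2

theorem PropSubmodular.powersetCardAvg_union_le {E : Type*} [DecidableEq E]
    {f : Finset E → ℝ} (hf : PropSubmodular f) {A B : Finset E} (hAB : Disjoint A B) {j : ℕ}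
    (hj : j + 2 ≤ #B) :
    (#A + j) * powersetCardAvg B (j + 2) (fun X => f (A ∪ X)) +
        (#A + j + 2) * powersetCardAvg B j (fun X => f (A ∪ X)) ≤
      2 * (#A + j + 1) * powersetCardAvg B (j + 1) (fun X => f (A ∪ X)) := by
  refine powersetCardAvg_flags_le B _ hj fun Z hZ u hu v hv => ?_
  obtain ⟨hZB, hZc⟩ := mem_powersetCard.mp hZ
  obtain ⟨hvu, hv⟩ := mem_erase.mp hv
  have hnotMem : ∀ w ∈ B \ Z, w ∉ A ∪ Z := fun w hw => by
    rw [mem_sdiff] at hw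
    simp [disjoint_right.mp hAB hw.1, hw.2]
  have hcard : #(A ∪ Z) = #A + j := by rw [card_union_of_disjoint (hAB.mono_right hZB), hZc]
  have := hf.insert_insert_le (hnotMem u hu) (hnotMem v hv) hvu.symm
  simpa only [union_insert, hcard, Nat.cast_add] using this

section Sequences

variable {a : ℝ} {h : ℕ → ℝ} {n : ℕ}

theorem increment_le_of_concave (ha : 0 < a)
    (hconc : ∀ j, j + 2 ≤ n →
      (a + j) * h (j + 2) + (a + j + 2) * h j ≤ 2 * (a + j + 1) * h (j + 1)) :
    ∀ j, j + 1 ≤ n →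
      a * (a + 1) * (h (j + 1) - h j) ≤ (a + j) * (a + j + 1) * (h 1 - h 0) := by
  intro j
  induction j with
  | zero => intro _; simp
  | succ i ih =>
    intro hi
    have hstep : (a + i) * (h (i + 2) - h (i + 1)) ≤ (a + i + 2) * (h (i + 1) - h i) := by
      linarith [hconc i (by omega)]
    have hai : 0 < a + i := by positivity
    refine le_of_mul_le_mul_left ?_ hai
    push_cast
    nlinarith [mul_le_mul_of_nonneg_left hstep (by positivity : 0 ≤ a * (a + 1)),
      mul_le_mul_of_nonneg_left (ih (by omega)) (by positivity : 0 ≤ a + i + 2)]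

theorem sum_range_mul_add_one (a : ℝ) (n : ℕ) :
    ∑ j ∈ range n, (a + j) * (a + j + 1) = n * (3 * a ^ 2 + 3 * a * n + n ^ 2 - 1) / 3 := by
  induction n with
  | zero => simp
  | succ n ih =>
    rw [sum_range_succ, ih]
    push_cast
    ring

theorem sub_le_of_concave (ha : 0 < a)
    (hconc : ∀ j, j + 2 ≤ n →
      (a + j) * h (j + 2) + (a + j + 2) * h j ≤ 2 * (a + j + 1) * h (j + 1)) :
    a * (a + 1) * (h n - h 0) ≤ n * (3 * a ^ 2 + 3 * a * n + n ^ 2 - 1) / 3 * (h 1 - h 0) := by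
  rw [← sum_range_sub, mul_sum, ← sum_range_mul_add_one, sum_mul]
  exact sum_le_sum fun j hj => increment_le_of_concave ha hconc j (mem_range.mp hj)

end Sequences

theorem stmt_4_general {E : Type*} [DecidableEq E]
    (f : Finset E → ℝ) (hps : PropSubmodular f)
    (A B : Finset E) (a b : ℕ) (ha : A.card = a) (hb : B.card = b)
    (ha1 : 1 ≤ a) (hAB : Disjoint A B) :
    ∑ e ∈ B, (f (insert e A) - f A) ≥
      (3 * (a : ℝ) * (1 + a) / (3 * (a : ℝ)^2 + 3 * a * b + (b : ℝ)^2 - 1))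
        * (f (A ∪ B) - f A) := by
  subst ha hb
  set h := fun k => powersetCardAvg B k (fun X => f (A ∪ X))
  have ha1' : (1 : ℝ) ≤ #A := by exact_mod_cast ha1
  have hD : (0 : ℝ) < 3 * (#A : ℝ) ^ 2 + 3 * #A * #B + (#B : ℝ) ^ 2 - 1 := by nlinarith
  have hkey := sub_le_of_concave (h := h) (by linarith) fun j hj =>
    hps.powersetCardAvg_union_le hAB hj
  have hsingle : #B * h 1 = ∑ e ∈ B, f (insert e A) := by
    simp only [h, card_mul_powersetCardAvg_one, union_singleton]
  simp only [h, powersetCardAvg_card, powersetCardAvg_zero, union_empty] at hkey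
  rw [ge_iff_le, sum_sub_distrib, sum_const, nsmul_eq_mul, ← hsingle, div_mul_eq_mul_div,
    div_le_iff₀ hD]
  linarith

theorem stmt_4 {E : Type*} [Fintype E] [DecidableEq E]
    (f : Finset E → ℝ) (hnn : ∀ S, 0 ≤ f S) (hps : PropSubmodular f)
    (A B : Finset E) (a b : ℕ) (ha : A.card = a) (hb : B.card = b)
    (ha1 : 1 ≤ a) (hb1 : 1 ≤ b) (hAB : Disjoint A B) :
    ∑ e ∈ B, (f (insert e A) - f A) ≥
      (3 * (a : ℝ) * (1 + a) / (3 * (a : ℝ)^2 + 3 * a * b + (b : ℝ)^2 - 1))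
        * (f (A ∪ B) - f A) :=
  stmt_4_general f hps A B a b ha hb ha1 hAB
end

section
/- Let f, g : 2^E → ℝ≥0 be monotone set functions and A, B ⊆ E disjoint. Suppose γ_f, γ_g ∈ [0,1] satisfy Σ_{e∈B} f_A(e) ≥ γ_f · f_A(B) and Σ_{e∈B} g_A(e) ≥ γ_g · g_A(B), with γ_f ≥ γ_g, and f(A ∪ B) > 0. Then the product h(S) = f(S)·g(S) satisfies Σ_{e∈B} h_A(e) ≥ (f(A)/f(A∪B)) · γ_g · h_A(B), where h_A(T) = h(A ∪ T) − h(A). -/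
/-!
Write `Δφ(e) = φ(A ∪ {e}) - φ(A)`. For monotone `f, g ≥ 0`,
`Δ(fg)(e) = f(A) Δg(e) + g(A) Δf(e) + Δf(e) Δg(e) ≥ f(A) Δg(e) + g(A) Δf(e)`, so summing over `B` and
using weak submodularity of `f` and `g` (with `γ_f ≥ γ_g`) gives
`Σ Δ(fg) ≥ γ_g (f(A) g_A(B) + g(A) f_A(B))`. On the other hand
`(fg)_A(B) = f(A ∪ B) g_A(B) + g(A) f_A(B)`, and scaling by `f(A) / f(A ∪ B) ≤ 1` turns this into
at most `f(A) g_A(B) + g(A) f_A(B)`.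
-/

open Finset

theorem le_mul_sub_mul_of_le {a a' b b' : ℝ} (ha : a ≤ a') (hb : b ≤ b') :
    a * (b' - b) + b * (a' - a) ≤ a' * b' - a * b := by
  nlinarith [mul_nonneg (sub_nonneg.2 ha) (sub_nonneg.2 hb)]

theorem le_sum_mul_sub_mul {ι : Type*} (s : Finset ι) {F G : ι → ℝ} {a b : ℝ}
    (hF : ∀ i ∈ s, a ≤ F i) (hG : ∀ i ∈ s, b ≤ G i) :
    a * ∑ i ∈ s, (G i - b) + b * ∑ i ∈ s, (F i - a) ≤ ∑ i ∈ s, (F i * G i - a * b) := by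
  rw [mul_sum, mul_sum, ← sum_add_distrib]
  exact sum_le_sum fun i hi => le_mul_sub_mul_of_le (hF i hi) (hG i hi)

theorem div_mul_mul_sub_mul_le {a a' b b' : ℝ} (haa' : a ≤ a') (ha' : 0 < a')
    (hb : 0 ≤ b) :
    a / a' * (a' * b' - a * b) ≤ a * (b' - b) + b * (a' - a) := by
  have hratio : a / a' ≤ 1 := (div_le_one ha').2 haa'
  have hsplit : a / a' * (a' * b' - a * b) = a * (b' - b) + a / a' * (b * (a' - a)) := by
    field_simp
    ring
  rw [hsplit]
  linarith [mul_le_of_le_one_left (mul_nonneg hb (sub_nonneg.2 haa')) hratio]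

theorem stmt_5_general {E : Type*} [DecidableEq E]
    (f g : Finset E → ℝ)
    (hfnn : ∀ S, 0 ≤ f S) (hgnn : ∀ S, 0 ≤ g S)
    (hfmono : ∀ S T : Finset E, S ⊆ T → f S ≤ f T)
    (hgmono : ∀ S T : Finset E, S ⊆ T → g S ≤ g T)
    (A B : Finset E)
    (γf γg : ℝ) (hγg0 : 0 ≤ γg)
    (hγ : γf ≥ γg)
    (hwf : ∑ e ∈ B, (f (insert e A) - f A) ≥ γf * (f (A ∪ B) - f A))
    (hwg : ∑ e ∈ B, (g (insert e A) - g A) ≥ γg * (g (A ∪ B) - g A))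
    (hpos : 0 < f (A ∪ B))
    (h : Finset E → ℝ) (hh : ∀ S, h S = f S * g S) :
    ∑ e ∈ B, (h (insert e A) - h A) ≥
      (f A / f (A ∪ B)) * γg * (h (A ∪ B) - h A) := by
  obtain rfl : h = fun S => f S * g S := funext hh
  have hfAB : f A ≤ f (A ∪ B) := hfmono _ _ subset_union_left
  have hgAB : g A ≤ g (A ∪ B) := hgmono _ _ subset_union_left
  have hwf' : γg * (f (A ∪ B) - f A) ≤ ∑ e ∈ B, (f (insert e A) - f A) :=
    (mul_le_mul_of_nonneg_right hγ (sub_nonneg.2 hfAB)).trans hwf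
  calc f A / f (A ∪ B) * γg * (f (A ∪ B) * g (A ∪ B) - f A * g A)
      = γg * (f A / f (A ∪ B) * (f (A ∪ B) * g (A ∪ B) - f A * g A)) := by ring
    _ ≤ γg * (f A * (g (A ∪ B) - g A) + g A * (f (A ∪ B) - f A)) := by
      gcongr
      exact div_mul_mul_sub_mul_le hfAB hpos (hgnn A)
    _ = f A * (γg * (g (A ∪ B) - g A)) + g A * (γg * (f (A ∪ B) - f A)) := by ring
    _ ≤ f A * ∑ e ∈ B, (g (insert e A) - g A) + g A * ∑ e ∈ B, (f (insert e A) - f A) := by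
      gcongr
      · exact hfnn A
      · exact hgnn A
    _ ≤ ∑ e ∈ B, (f (insert e A) * g (insert e A) - f A * g A) :=
      le_sum_mul_sub_mul B (fun e _ => hfmono _ _ (subset_insert e A))
        (fun e _ => hgmono _ _ (subset_insert e A))

theorem stmt_5 {E : Type*} [Fintype E] [DecidableEq E]
    (f g : Finset E → ℝ)
    (hfnn : ∀ S, 0 ≤ f S) (hgnn : ∀ S, 0 ≤ g S)
    (hfmono : ∀ S T : Finset E, S ⊆ T → f S ≤ f T)
    (hgmono : ∀ S T : Finset E, S ⊆ T → g S ≤ g T)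
    (A B : Finset E) (hAB : Disjoint A B)
    (γf γg : ℝ) (hγf0 : 0 ≤ γf) (hγf1 : γf ≤ 1) (hγg0 : 0 ≤ γg) (hγg1 : γg ≤ 1)
    (hγ : γf ≥ γg)
    (hwf : ∑ e ∈ B, (f (insert e A) - f A) ≥ γf * (f (A ∪ B) - f A))
    (hwg : ∑ e ∈ B, (g (insert e A) - g A) ≥ γg * (g (A ∪ B) - g A))
    (hpos : 0 < f (A ∪ B))
    (h : Finset E → ℝ) (hh : ∀ S, h S = f S * g S) :
    ∑ e ∈ B, (h (insert e A) - h A) ≥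
      (f A / f (A ∪ B)) * γg * (h (A ∪ B) - h A) :=
  stmt_5_general f g hfnn hgnn hfmono hgmono A B γf γg hγg0 hγ hwf hwg hpos h hh
end

section
/- Let f, g : 2^E → ℝ≥0 be monotone set functions with global weak-submodularity parameters γ_f ≥ γ_g (i.e., Σ_{e∈B} f_A(e) ≥ γ_f f_A(B) and Σ_{e∈B} g_A(e) ≥ γ_g g_A(B) for all disjoint A, B). If f(A∪B) > 0 and g(A∪B) > 0, then the product h = f·g satisfies Σ_{e∈B} h_A(e) ≥ γ_g · max{ f(A)/f(A∪B), g(A)/g(A∪B) } · h_A(B). -/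
open Finset

theorem stmt_6 {E : Type*} [Fintype E] [DecidableEq E]
    (f g : Finset E → ℝ)
    (hfnn : ∀ S, 0 ≤ f S) (hgnn : ∀ S, 0 ≤ g S)
    (hfmono : ∀ S T : Finset E, S ⊆ T → f S ≤ f T)
    (hgmono : ∀ S T : Finset E, S ⊆ T → g S ≤ g T)
    (γf γg : ℝ) (hγf0 : 0 ≤ γf) (hγf1 : γf ≤ 1) (hγg0 : 0 ≤ γg) (hγg1 : γg ≤ 1)
    (hγ : γf ≥ γg)
    (hwf : ∀ A B : Finset E, Disjoint A B →
      ∑ e ∈ B, (f (insert e A) - f A) ≥ γf * (f (A ∪ B) - f A))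
    (hwg : ∀ A B : Finset E, Disjoint A B →
      ∑ e ∈ B, (g (insert e A) - g A) ≥ γg * (g (A ∪ B) - g A))
    (h : Finset E → ℝ) (hh : ∀ S, h S = f S * g S)
    (A B : Finset E) (hAB : Disjoint A B)
    (hfpos : 0 < f (A ∪ B)) (hgpos : 0 < g (A ∪ B)) :
    ∑ e ∈ B, (h (insert e A) - h A) ≥
      γg * max (f A / f (A ∪ B)) (g A / g (A ∪ B)) * (h (A ∪ B) - h A) := by
  have hfm : f A ≤ f (A ∪ B) := hfmono _ _ Finset.subset_union_left
  have hgm : g A ≤ g (A ∪ B) := hgmono _ _ Finset.subset_union_left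
  have key1 : g A * (∑ e ∈ B, (f (insert e A) - f A)) +
      f A * (∑ e ∈ B, (g (insert e A) - g A)) ≤
      ∑ e ∈ B, (h (insert e A) - h A) := by
    rw [Finset.mul_sum, Finset.mul_sum, ← Finset.sum_add_distrib]
    apply Finset.sum_le_sum
    intro e _
    have h1 := hfmono A (insert e A) (Finset.subset_insert e A)
    have h2 := hgmono A (insert e A) (Finset.subset_insert e A)
    rw [hh, hh]
    nlinarith [hfnn A, hgnn A]
  have hf1 := hwf A B hAB
  have hg1 := hwg A B hAB
  have key2 : γg * (g A * (f (A ∪ B) - f A) + f A * (g (A ∪ B) - g A)) ≤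
      g A * (∑ e ∈ B, (f (insert e A) - f A)) +
      f A * (∑ e ∈ B, (g (insert e A) - g A)) := by
    have h1 : g A * (γg * (f (A ∪ B) - f A)) ≤
        g A * (∑ e ∈ B, (f (insert e A) - f A)) := by
      apply mul_le_mul_of_nonneg_left _ (hgnn A)
      nlinarith [sub_nonneg.mpr hfm]
    have h2 : f A * (γg * (g (A ∪ B) - g A)) ≤
        f A * (∑ e ∈ B, (g (insert e A) - g A)) :=
      mul_le_mul_of_nonneg_left hg1 (hfnn A)
    nlinarith
  have key3 : max (f A / f (A ∪ B)) (g A / g (A ∪ B)) * (h (A ∪ B) - h A) ≤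
      g A * (f (A ∪ B) - f A) + f A * (g (A ∪ B) - g A) := by
    rw [hh, hh]
    rcases max_choice (f A / f (A ∪ B)) (g A / g (A ∪ B)) with hm | hm <;> rw [hm]
    · rw [div_mul_eq_mul_div, div_le_iff₀ hfpos]
      nlinarith [mul_nonneg (hgnn A) (sq_nonneg (f (A ∪ B) - f A))]
    · rw [div_mul_eq_mul_div, div_le_iff₀ hgpos]
      nlinarith [mul_nonneg (hfnn A) (sq_nonneg (g (A ∪ B) - g A))]
  calc γg * max (f A / f (A ∪ B)) (g A / g (A ∪ B)) * (h (A ∪ B) - h A)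
      = γg * (max (f A / f (A ∪ B)) (g A / g (A ∪ B)) * (h (A ∪ B) - h A)) := by ring
    _ ≤ γg * (g A * (f (A ∪ B) - f A) + f A * (g (A ∪ B) - g A)) :=
        mul_le_mul_of_nonneg_left key3 hγg0
    _ ≤ g A * (∑ e ∈ B, (f (insert e A) - f A)) +
        f A * (∑ e ∈ B, (g (insert e A) - g A)) := key2
    _ ≤ ∑ e ∈ B, (h (insert e A) - h A) := key1
end

section
/- Let f : 2^E → ℝ≥0 be submodular. Then for any two disjoint sets A, B ⊆ E with |A| = a ≥ 1 and |B| = b ≥ 1, the function g(S) := |S|·f(S) satisfies Σ_{e∈B} (g(A∪{e}) − g(A)) ≥ ((a+1)/(a+b)) · (g(A∪B) − g(A)). -/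
/-!
Submodularity bounds the total of the single-element marginals of `f` over `B` by the joint
marginal `f (A ∪ B) - f A`. Writing `|S| f(S)` in terms of marginals of `f`, both sides of the
claim become `(a + 1)` times these marginals plus a multiple of `f A`, namely `b · f A` on the
left and `(a + 1) b / (a + b) · f A` on the right; the latter is smaller because `b ≥ 1` and
`f A ≥ 0`.
-/

open Finset

theorem sub_le_sum_marginal_of_submodular {α β : Type*} [DecidableEq α] [AddCommGroup β]
    [PartialOrder β] [IsOrderedAddMonoid β] (f : Finset α → β)
    (hsub : ∀ S T : Finset α, f S + f T ≥ f (S ∪ T) + f (S ∩ T)) {A B : Finset α}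
    (hAB : Disjoint A B) : f (A ∪ B) - f A ≤ ∑ e ∈ B, (f (insert e A) - f A) := by
  induction B using Finset.induction_on generalizing A with
  | empty => simp
  | insert x B hx ih =>
    have hxA : x ∉ A := disjoint_right.mp hAB (mem_insert_self x B)
    have hunion : insert x A ∪ (A ∪ B) = A ∪ insert x B := by
      ext; simp only [mem_union, mem_insert]; tauto
    have hinter : insert x A ∩ (A ∪ B) = A := by
      rw [insert_inter_of_notMem (by simp [hxA, hx]), inter_eq_left.mpr subset_union_left]
    have hstep := hsub (insert x A) (A ∪ B)
    rw [hunion, hinter] at hstep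
    calc f (A ∪ insert x B) - f A
        = f (A ∪ insert x B) + f A - f A - f A := by abel
      _ ≤ f (insert x A) + f (A ∪ B) - f A - f A := sub_le_sub_right (sub_le_sub_right hstep _) _
      _ = (f (insert x A) - f A) + (f (A ∪ B) - f A) := by abel
      _ ≤ (f (insert x A) - f A) + ∑ e ∈ B, (f (insert e A) - f A) :=
          add_le_add_right (ih (hAB.mono_right (subset_insert x B))) _
      _ = ∑ e ∈ insert x B, (f (insert e A) - f A) := by rw [sum_insert hx]

theorem card_mul_insert_sub_card_mul {α : Type*} [DecidableEq α] (f : Finset α → ℝ)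
    {A : Finset α} {e : α} (he : e ∉ A) :
    ((insert e A).card : ℝ) * f (insert e A) - A.card * f A
      = (A.card + 1) * (f (insert e A) - f A) + f A := by
  rw [card_insert_of_notMem he]
  push_cast
  ring

theorem card_mul_union_sub_card_mul {α : Type*} [DecidableEq α] (f : Finset α → ℝ)
    {A B : Finset α} (hAB : Disjoint A B) :
    ((A ∪ B).card : ℝ) * f (A ∪ B) - A.card * f A
      = (A.card + B.card) * (f (A ∪ B) - f A) + B.card * f A := by
  rw [card_union_of_disjoint hAB]
  push_cast
  ring

theorem stmt_7_general {E : Type*} [DecidableEq E]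
    (f : Finset E → ℝ) (hnn : ∀ S, 0 ≤ f S)
    (hsub : ∀ S T : Finset E, f S + f T ≥ f (S ∪ T) + f (S ∩ T))
    (g : Finset E → ℝ) (hg : ∀ S : Finset E, g S = (S.card : ℝ) * f S)
    (A B : Finset E) (a b : ℕ) (ha : A.card = a) (hb : B.card = b)
    (hb1 : 1 ≤ b) (hAB : Disjoint A B) :
    ∑ e ∈ B, (g (insert e A) - g A) ≥
      (((a : ℝ) + 1) / ((a : ℝ) + b)) * (g (A ∪ B) - g A) := by
  subst ha hb
  have hmarg := sub_le_sum_marginal_of_submodular f hsub hAB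
  have hlhs : ∑ e ∈ B, (g (insert e A) - g A)
      = (A.card + 1) * ∑ e ∈ B, (f (insert e A) - f A) + B.card * f A := by
    rw [sum_congr rfl fun e he => by
      rw [hg, hg, card_mul_insert_sub_card_mul f (disjoint_right.mp hAB he)]]
    rw [sum_add_distrib, ← mul_sum, sum_const, nsmul_eq_mul]
  have hrhs : g (A ∪ B) - g A = (A.card + B.card) * (f (A ∪ B) - f A) + B.card * f A := by
    rw [hg, hg, card_mul_union_sub_card_mul f hAB]
  have hb1' : (1 : ℝ) ≤ B.card := by exact_mod_cast hb1
  have hpos : (0 : ℝ) < A.card + B.card := by positivity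
  rw [hlhs, hrhs, ge_iff_le, div_mul_eq_mul_div, div_le_iff₀ hpos]
  have hA := hnn A
  linarith [mul_le_mul_of_nonneg_left hmarg
      (by positivity : (0 : ℝ) ≤ (A.card + 1) * (A.card + B.card)),
    mul_nonneg (mul_nonneg (by positivity : (0 : ℝ) ≤ B.card) (sub_nonneg.mpr hb1')) hA]

theorem stmt_7 {E : Type*} [Fintype E] [DecidableEq E]
    (f : Finset E → ℝ) (hnn : ∀ S, 0 ≤ f S)
    (hsub : ∀ S T : Finset E, f S + f T ≥ f (S ∪ T) + f (S ∩ T))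
    (g : Finset E → ℝ) (hg : ∀ S : Finset E, g S = (S.card : ℝ) * f S)
    (A B : Finset E) (a b : ℕ) (ha : A.card = a) (hb : B.card = b)
    (ha1 : 1 ≤ a) (hb1 : 1 ≤ b) (hAB : Disjoint A B) :
    ∑ e ∈ B, (g (insert e A) - g A) ≥
      (((a : ℝ) + 1) / ((a : ℝ) + b)) * (g (A ∪ B) - g A) :=
  stmt_7_general f hnn hsub g hg A B a b ha hb hb1 hAB
end

section
/- Let f : 2^E → ℝ≥0 be submodular. Then for any two disjoint nonempty sets A, B ⊆ E with |A| = a and |B| = b, the function g(S) := f(S)/|S| (for nonempty S) satisfies Σ_{e∈B} (g(A∪{e}) − g(A)) ≥ ((a+b)/(a+1)) · (g(A∪B) − g(A)). -/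
/-!
Submodularity makes marginal gains subadditive: `f (A ∪ B) - f A` is at most the sum over
`e ∈ B` of `f (insert e A) - f A`. Rewriting each normalized gain `g (insert e A) - g A` as
`(f (insert e A) - f A) / (a + 1) - f A / (a (a + 1))`, and the right-hand side likewise, the
inequality becomes exactly this subadditivity divided by `a + 1`.
-/

open Finset

theorem sub_le_sum_sub_of_submodular {α : Type*} [DecidableEq α] {f : Finset α → ℝ}
    (hsub : ∀ S T : Finset α, f S + f T ≥ f (S ∪ T) + f (S ∩ T)) (A C : Finset α) :
    f (A ∪ C) - f A ≤ ∑ e ∈ C, (f (insert e A) - f A) := by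
  induction C using Finset.induction_on with
  | empty => simp
  | insert e C he ih =>
    have hunion : (A ∪ C) ∪ insert e A = A ∪ insert e C := by
      ext x; simp only [mem_union, mem_insert]; tauto
    have hinter : (A ∪ C) ∩ insert e A = A := by
      ext x; simp only [mem_inter, mem_union, mem_insert]; grind
    have hstep := hsub (A ∪ C) (insert e A)
    rw [hunion, hinter] at hstep
    rw [sum_insert he]
    linarith

theorem stmt_8_general {E : Type*} [DecidableEq E]
    (f : Finset E → ℝ)
    (hsub : ∀ S T : Finset E, f S + f T ≥ f (S ∪ T) + f (S ∩ T))
    (g : Finset E → ℝ) (hg : ∀ S : Finset E, S.Nonempty → g S = f S / (S.card : ℝ))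
    (A B : Finset E) (a b : ℕ) (ha : A.card = a) (hb : B.card = b)
    (hA : A.Nonempty) (hAB : Disjoint A B) :
    ∑ e ∈ B, (g (insert e A) - g A) ≥
      (((a : ℝ) + b) / ((a : ℝ) + 1)) * (g (A ∪ B) - g A) := by
  have ha0 : (0 : ℝ) < a := by rw [← ha]; exact_mod_cast hA.card_pos
  set c := f A / (a * (a + 1)) with hc
  have hgA : g A = f A / a := by rw [hg A hA, ha]
  have hgain : ∀ e ∈ B, g (insert e A) - g A = (f (insert e A) - f A) / (a + 1) - c := by
    intro e he
    rw [hg _ (insert_nonempty e A), card_insert_of_notMem (disjoint_right.mp hAB he), ha, hgA, hc]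
    push_cast
    field_simp
    ring
  have hgAB : ((a : ℝ) + b) / (a + 1) * (g (A ∪ B) - g A) = (f (A ∪ B) - f A) / (a + 1) - b * c := by
    rw [hg _ (hA.mono subset_union_left), card_union_of_disjoint hAB, ha, hb, hgA, hc]
    push_cast
    have hab : (0 : ℝ) < a + b := by positivity
    field_simp
    ring
  rw [sum_congr rfl hgain, sum_sub_distrib, ← sum_div, sum_const, hb, nsmul_eq_mul, hgAB, ge_iff_le]
  gcongr
  exact sub_le_sum_sub_of_submodular hsub A B

theorem stmt_8 {E : Type*} [Fintype E] [DecidableEq E]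
    (f : Finset E → ℝ) (hnn : ∀ S, 0 ≤ f S)
    (hsub : ∀ S T : Finset E, f S + f T ≥ f (S ∪ T) + f (S ∩ T))
    (g : Finset E → ℝ) (hg : ∀ S : Finset E, S.Nonempty → g S = f S / (S.card : ℝ))
    (A B : Finset E) (a b : ℕ) (ha : A.card = a) (hb : B.card = b)
    (hA : A.Nonempty) (hB : B.Nonempty) (hAB : Disjoint A B) :
    ∑ e ∈ B, (g (insert e A) - g A) ≥
      (((a : ℝ) + b) / ((a : ℝ) + 1)) * (g (A ∪ B) - g A) :=
  stmt_8_general f hsub g hg A B a b ha hb hA hAB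
end

section
/- Let f : 2^E → ℝ≥0 be monotone submodular, with S* a maximizer of f over sets of size at most k. If U ⊆ E satisfies f(U) ≥ α · f(S*) for some α > 0, then for every pair of sets A ⊇ U and B with |B| ≤ k and f(A∪B) > 0, we have f(A)/f(A∪B) ≥ α/(1+α). -/
open Finset

theorem submodular_union_le_add {E : Type*} [DecidableEq E] {f : Finset E → ℝ}
    (hnn : ∀ S, 0 ≤ f S) (hsub : ∀ S T : Finset E, f S + f T ≥ f (S ∪ T) + f (S ∩ T))
    (S T : Finset E) : f (S ∪ T) ≤ f S + f T := by
  linarith [hsub S T, hnn (S ∩ T)]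

theorem div_one_add_le_div_of_le_add {α a s u : ℝ} (hα : 0 < α) (hu : 0 < u)
    (hua : u ≤ a + s) (hs : α * s ≤ a) : α / (1 + α) ≤ a / u := by
  rw [div_le_div_iff₀ (by positivity) hu]
  nlinarith [mul_le_mul_of_nonneg_left hua hα.le]

theorem stmt_11_general {E : Type*} [DecidableEq E]
    (f : Finset E → ℝ) (hnn : ∀ S, 0 ≤ f S)
    (hmono : ∀ S T : Finset E, S ⊆ T → f S ≤ f T)
    (hsub : ∀ S T : Finset E, f S + f T ≥ f (S ∪ T) + f (S ∩ T))
    (k : ℕ)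
    (Sstar : Finset E)
    (hSmax : ∀ S : Finset E, S.card ≤ k → f S ≤ f Sstar)
    (α : ℝ) (hα : 0 < α)
    (U : Finset E) (hU : f U ≥ α * f Sstar)
    (A B : Finset E) (hUA : U ⊆ A) (hB : B.card ≤ k)
    (hpos : 0 < f (A ∪ B)) :
    f A / f (A ∪ B) ≥ α / (1 + α) := by
  have hA : α * f Sstar ≤ f A := hU.trans (hmono U A hUA)
  have hAB : f (A ∪ B) ≤ f A + f Sstar :=
    (submodular_union_le_add hnn hsub A B).trans (by linarith [hSmax B hB])
  exact div_one_add_le_div_of_le_add hα hpos hAB hA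

theorem stmt_11 {E : Type*} [Fintype E] [DecidableEq E]
    (f : Finset E → ℝ) (hnn : ∀ S, 0 ≤ f S)
    (hmono : ∀ S T : Finset E, S ⊆ T → f S ≤ f T)
    (hsub : ∀ S T : Finset E, f S + f T ≥ f (S ∪ T) + f (S ∩ T))
    (k : ℕ) (hk : 1 ≤ k)
    (Sstar : Finset E) (hScard : Sstar.card ≤ k)
    (hSmax : ∀ S : Finset E, S.card ≤ k → f S ≤ f Sstar)
    (α : ℝ) (hα : 0 < α)
    (U : Finset E) (hU : f U ≥ α * f Sstar)
    (A B : Finset E) (hUA : U ⊆ A) (hB : B.card ≤ k)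
    (hpos : 0 < f (A ∪ B)) :
    f A / f (A ∪ B) ≥ α / (1 + α) :=
  stmt_11_general f hnn hmono hsub k Sstar hSmax α hα U hU A B hUA hB hpos
end

section
/- Let f : 2^E → ℝ≥0 be monotone submodular and g a metric diversity function g(S) = Σ_{ {u,v} ⊆ S } d(u,v) for a metric d. Then for any disjoint A, B ⊆ E with |A| = a ≥ 1 and |B| = b ≥ 1, the sum f + g satisfies Σ_{e∈B} (f+g)_A(e) ≥ (a/(a+b−1)) · (f+g)_A(B). -/
/-!
The submodular part loses nothing: by submodularity the marginal of `B` is at most the sum of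
the single-element marginals, and it is nonnegative by monotonicity. For the diversity part,
the marginal of `B` is `D + S / 2`, where `D = ∑_{u ∈ B, x ∈ A} d(u, x)` is also the sum of the
single-element marginals and `S = ∑_{u, v ∈ B} d(u, v)`. The triangle inequality through each
`x ∈ A` gives `a · d(u, v) ≤ ∑_{x ∈ A} (d(u, x) + d(v, x))`, and summing over the ordered pairs
`u ≠ v` of `B` yields `a · S ≤ 2 (b - 1) D`, which is exactly what the factor `a / (a + b - 1)`
absorbs.
-/

open Finset

theorem sub_le_sum_insert_sub_of_submodular {E : Type*} [DecidableEq E] {f : Finset E → ℝ}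
    (hsub : ∀ S T : Finset E, f S + f T ≥ f (S ∪ T) + f (S ∩ T)) (A B : Finset E) :
    f (A ∪ B) - f A ≤ ∑ e ∈ B, (f (insert e A) - f A) := by
  induction B using Finset.induction_on with
  | empty => simp
  | @insert e B heB ih =>
    have hunion : (A ∪ B) ∪ insert e A = A ∪ insert e B := by
      ext x; simp only [mem_union, mem_insert]; tauto
    have hinter : (A ∪ B) ∩ insert e A = A := by
      ext x; simp only [mem_inter, mem_union, mem_insert]; grind
    have := hsub (A ∪ B) (insert e A)
    rw [hunion, hinter] at this
    rw [sum_insert heB]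
    linarith

section Metric

variable {E : Type*} {d : E → E → ℝ}

theorem card_mul_le_sum_add_sum (hsymm : ∀ u v, d u v = d v u)
    (htri : ∀ u v w, d u w ≤ d u v + d v w) (A : Finset E) (u v : E) :
    #A * d u v ≤ ∑ x ∈ A, d u x + ∑ x ∈ A, d v x := by
  calc #A * d u v = ∑ _x ∈ A, d u v := by rw [sum_const, nsmul_eq_mul]
    _ ≤ ∑ x ∈ A, (d u x + d x v) := sum_le_sum fun x _ ↦ htri u x v
    _ = ∑ x ∈ A, d u x + ∑ x ∈ A, d v x := by simp only [sum_add_distrib, hsymm _ v]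

variable [DecidableEq E]

theorem sum_sum_union_of_disjoint (hsymm : ∀ u v, d u v = d v u) {A B : Finset E}
    (hAB : Disjoint A B) :
    ∑ u ∈ A ∪ B, ∑ v ∈ A ∪ B, d u v =
      ∑ u ∈ A, ∑ v ∈ A, d u v + 2 * ∑ u ∈ B, ∑ x ∈ A, d u x + ∑ u ∈ B, ∑ v ∈ B, d u v := by
  have hcross : ∑ u ∈ A, ∑ v ∈ B, d u v = ∑ u ∈ B, ∑ x ∈ A, d u x := by
    rw [sum_comm]; simp only [hsymm _ _]
  simp only [sum_union hAB, sum_add_distrib, hcross]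
  ring

theorem card_mul_sum_sum_le (hsymm : ∀ u v, d u v = d v u) (hself : ∀ u, d u u = 0)
    (htri : ∀ u v w, d u w ≤ d u v + d v w) (A B : Finset E) :
    #A * ∑ u ∈ B, ∑ v ∈ B, d u v ≤ 2 * (#B - 1) * ∑ u ∈ B, ∑ x ∈ A, d u x := by
  set h : E → ℝ := fun u ↦ ∑ x ∈ A, d u x
  have hoff : ∀ u ∈ B, ∑ v ∈ B, d u v = ∑ v ∈ B.erase u, d u v := fun u hu ↦ by
    rw [← add_sum_erase B _ hu, hself, zero_add]
  have hpairs : ∀ u ∈ B, ∑ v ∈ B.erase u, (h u + h v) = (#B - 1) * h u + (∑ v ∈ B, h v - h u) :=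
    fun u hu ↦ by
      rw [sum_add_distrib, sum_const, nsmul_eq_mul, cast_card_erase_of_mem hu,
        sum_erase_eq_sub hu]
  calc #A * ∑ u ∈ B, ∑ v ∈ B, d u v = ∑ u ∈ B, ∑ v ∈ B.erase u, #A * d u v := by
        rw [mul_sum]; exact sum_congr rfl fun u hu ↦ by rw [hoff u hu, mul_sum]
    _ ≤ ∑ u ∈ B, ∑ v ∈ B.erase u, (h u + h v) :=
        sum_le_sum fun u _ ↦ sum_le_sum fun v _ ↦ card_mul_le_sum_add_sum hsymm htri A u v
    _ = 2 * (#B - 1) * ∑ u ∈ B, h u := by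
        rw [sum_congr rfl hpairs, sum_add_distrib, sum_sub_distrib, ← mul_sum, sum_const,
          nsmul_eq_mul]
        ring

end Metric

theorem stmt_14_general {E : Type*} [DecidableEq E]
    (f : Finset E → ℝ)
    (hmono : ∀ S T : Finset E, S ⊆ T → f S ≤ f T)
    (hsub : ∀ S T : Finset E, f S + f T ≥ f (S ∪ T) + f (S ∩ T))
    (d : E → E → ℝ)
    (hsymm : ∀ u v, d u v = d v u)
    (hself : ∀ u, d u u = 0)
    (htri : ∀ u v w, d u w ≤ d u v + d v w)
    (g : Finset E → ℝ)
    (hg : ∀ S : Finset E, g S = (∑ u ∈ S, ∑ v ∈ S, d u v) / 2)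
    (A B : Finset E) (a b : ℕ) (ha : A.card = a) (hb : B.card = b)
    (ha1 : 1 ≤ a) (hb1 : 1 ≤ b) (hAB : Disjoint A B) :
    ∑ e ∈ B, ((f (insert e A) + g (insert e A)) - (f A + g A)) ≥
      ((a : ℝ) / ((a : ℝ) + b - 1)) *
        ((f (A ∪ B) + g (A ∪ B)) - (f A + g A)) := by
  have hg_insert : ∀ e ∈ B, g (insert e A) - g A = ∑ x ∈ A, d e x := fun e he ↦ by
    rw [insert_eq, union_comm, hg, hg,
      sum_sum_union_of_disjoint hsymm (disjoint_singleton_right.2 (disjoint_right.1 hAB he))]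
    simp only [sum_singleton, hself, add_zero]
    ring
  have hg_union := sum_sum_union_of_disjoint hsymm hAB
  have hf_union := sub_le_sum_insert_sub_of_submodular hsub A B
  have hf_mono := hmono A (A ∪ B) subset_union_left
  have hdiv := card_mul_sum_sum_le hsymm hself htri A B
  rw [ha, hb] at hdiv
  have hab : (1 : ℝ) ≤ a ∧ (1 : ℝ) ≤ b := ⟨by exact_mod_cast ha1, by exact_mod_cast hb1⟩
  have hlhs : ∑ e ∈ B, ((f (insert e A) + g (insert e A)) - (f A + g A)) =
      ∑ e ∈ B, (f (insert e A) - f A) + ∑ u ∈ B, ∑ x ∈ A, d u x := by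
    rw [← sum_add_distrib]
    exact sum_congr rfl fun e he ↦ by rw [← hg_insert e he]; ring
  have hrhs : (f (A ∪ B) + g (A ∪ B)) - (f A + g A) =
      (f (A ∪ B) - f A) + (∑ u ∈ B, ∑ x ∈ A, d u x + (∑ u ∈ B, ∑ v ∈ B, d u v) / 2) := by
    rw [hg, hg, hg_union]; ring
  rw [ge_iff_le, hlhs, hrhs, div_mul_eq_mul_div, div_le_iff₀ (by linarith)]
  nlinarith

theorem stmt_14 {E : Type*} [Fintype E] [DecidableEq E]
    (f : Finset E → ℝ) (hnn : ∀ S, 0 ≤ f S)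
    (hmono : ∀ S T : Finset E, S ⊆ T → f S ≤ f T)
    (hsub : ∀ S T : Finset E, f S + f T ≥ f (S ∪ T) + f (S ∩ T))
    (d : E → E → ℝ)
    (hdnn : ∀ u v, 0 ≤ d u v)
    (hsymm : ∀ u v, d u v = d v u)
    (hself : ∀ u, d u u = 0)
    (htri : ∀ u v w, d u w ≤ d u v + d v w)
    (g : Finset E → ℝ)
    (hg : ∀ S : Finset E, g S = (∑ u ∈ S, ∑ v ∈ S, d u v) / 2)
    (A B : Finset E) (a b : ℕ) (ha : A.card = a) (hb : B.card = b)
    (ha1 : 1 ≤ a) (hb1 : 1 ≤ b) (hAB : Disjoint A B) :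
    ∑ e ∈ B, ((f (insert e A) + g (insert e A)) - (f A + g A)) ≥
      ((a : ℝ) / ((a : ℝ) + b - 1)) *
        ((f (A ∪ B) + g (A ∪ B)) - (f A + g A)) :=
  stmt_14_general f hmono hsub d hsymm hself htri g hg A B a b ha hb ha1 hb1 hAB
end

section
/- Let f : 2^E → ℝ≥0 be monotone submodular and h : 2^E → ℝ≥0 be submodular (possibly non-monotone). Define F(S) := f(S) + |S|·h(S). Then for any disjoint A, B ⊆ E with |A| = a ≥ 1 and |B| = b ≥ 1, Σ_{e∈B} F_A(e) ≥ ((a+1)/(a+b)) · F_A(B). -/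
open Finset

lemma submod_marginal_sum {E : Type*} [DecidableEq E]
    (g : Finset E → ℝ)
    (hg : ∀ S T : Finset E, g S + g T ≥ g (S ∪ T) + g (S ∩ T))
    (A : Finset E) :
    ∀ B : Finset E, Disjoint A B →
      ∑ e ∈ B, (g (insert e A) - g A) ≥ g (A ∪ B) - g A := by
  intro B
  induction B using Finset.induction_on with
  | empty => simp
  | @insert e B heB ih =>
    intro hd
    have heA : e ∉ A := fun hmem => (Finset.disjoint_left.mp hd hmem) (Finset.mem_insert_self e B)
    have hdB : Disjoint A B := hd.mono_right (Finset.subset_insert e B)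
    rw [Finset.sum_insert heB]
    have key := hg (insert e A) (A ∪ B)
    have hu : (insert e A) ∪ (A ∪ B) = A ∪ insert e B := by
      ext x; simp only [Finset.mem_insert, Finset.mem_union]; tauto
    have hi : (insert e A) ∩ (A ∪ B) = A := by
      ext x
      simp only [Finset.mem_inter, Finset.mem_insert, Finset.mem_union]
      constructor
      · rintro ⟨hx1 | hx1, hx2⟩
        · subst hx1
          rcases hx2 with hx | hx
          · exact hx
          · exact absurd hx heB
        · exact hx1
      · intro hx; exact ⟨Or.inr hx, Or.inl hx⟩
    rw [hu, hi] at key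
    have := ih hdB
    linarith

theorem stmt_15 {E : Type*} [Fintype E] [DecidableEq E]
    (f : Finset E → ℝ) (hfnn : ∀ S, 0 ≤ f S)
    (hfmono : ∀ S T : Finset E, S ⊆ T → f S ≤ f T)
    (hfsub : ∀ S T : Finset E, f S + f T ≥ f (S ∪ T) + f (S ∩ T))
    (h : Finset E → ℝ) (hhnn : ∀ S, 0 ≤ h S)
    (hhsub : ∀ S T : Finset E, h S + h T ≥ h (S ∪ T) + h (S ∩ T))
    (F : Finset E → ℝ) (hF : ∀ S : Finset E, F S = f S + (S.card : ℝ) * h S)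
    (A B : Finset E) (a b : ℕ) (ha : A.card = a) (hb : B.card = b)
    (ha1 : 1 ≤ a) (hb1 : 1 ≤ b) (hAB : Disjoint A B) :
    ∑ e ∈ B, (F (insert e A) - F A) ≥
      (((a : ℝ) + 1) / ((a : ℝ) + b)) * (F (A ∪ B) - F A) := by
  have hcardAB : (A ∪ B).card = a + b := by
    rw [Finset.card_union_of_disjoint hAB, ha, hb]
  have hc1 : (1 : ℝ) ≤ (a : ℝ) := by exact_mod_cast ha1
  have hd1 : (1 : ℝ) ≤ (b : ℝ) := by exact_mod_cast hb1
  have hcd : 0 < (a:ℝ) + (b:ℝ) := by linarith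
  -- pointwise rewrite of summand
  have hsum : ∑ e ∈ B, (F (insert e A) - F A)
      = ∑ e ∈ B, ((f (insert e A) - f A) + ((a:ℝ) + 1) * (h (insert e A) - h A) + h A) := by
    apply Finset.sum_congr rfl
    intro e heB
    have heA : e ∉ A := Finset.disjoint_right.mp hAB heB
    have hcard : ((insert e A).card : ℝ) = (a:ℝ) + 1 := by
      rw [Finset.card_insert_of_notMem heA, ha]; push_cast; ring
    rw [hF, hF, hcard, ha]
    ring
  rw [hsum, Finset.sum_add_distrib, Finset.sum_add_distrib, ← Finset.mul_sum,
    Finset.sum_const, hb, nsmul_eq_mul]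
  set P := ∑ e ∈ B, (f (insert e A) - f A) with hP
  set Q := ∑ e ∈ B, (h (insert e A) - h A) with hQ
  have hPf : P ≥ f (A ∪ B) - f A := submod_marginal_sum f hfsub A B hAB
  have hQh : Q ≥ h (A ∪ B) - h A := submod_marginal_sum h hhsub A B hAB
  have hfAB : f (A ∪ B) - f A ≥ 0 := by
    have := hfmono A (A ∪ B) (Finset.subset_union_left)
    linarith
  have hhA : 0 ≤ h A := hhnn A
  rw [hF (A ∪ B), hF A, hcardAB, ha]
  push_cast
  rw [ge_iff_le, div_mul_eq_mul_div, div_le_iff₀ hcd]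
  nlinarith [mul_le_mul_of_nonneg_left hPf (le_of_lt hcd),
    mul_le_mul_of_nonneg_left hQh (by nlinarith : (0:ℝ) ≤ ((a:ℝ)+1)*((a:ℝ)+(b:ℝ))),
    mul_nonneg (by linarith : (0:ℝ) ≤ (b:ℝ) - 1) hfAB,
    mul_nonneg (mul_nonneg (by linarith : (0:ℝ) ≤ (b:ℝ) - 1) (by linarith : (0:ℝ) ≤ (b:ℝ))) hhA]
end

section
/- (Non-monotone recursion) Let f : 2^E → ℝ≥0, OPT a fixed set, k ≥ 1, and suppose real sequences a_i, b_i with a_i ∈ [0,1], b_i ∈ [0,k], and nonnegative reals x₀ = 0, x₁, …, x_k, y₀ = f(OPT), y₁, …, y_k satisfy x_{i} ≥ (1 − a_{i−1}/k)·x_{i−1} + (a_{i−1}/k)·y_{i−1} and y_i ≥ (1 − b_i/k)·y_{i−1} for all 1 ≤ i ≤ k. Then x_i ≥ (∏_{j=1}^{i−1} min{1 − b_j/k, 1 − a_j/k}) · (Σ_{j=0}^{i−1} a_j/k) · f(OPT) for every 1 ≤ i ≤ k. -/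
open Finset

theorem stmt_18 (k : ℕ) (hk : 1 ≤ k)
    (fOPT : ℝ) (hfOPT : 0 ≤ fOPT)
    (a b : ℕ → ℝ)
    (ha0 : ∀ i, 0 ≤ a i) (ha1 : ∀ i, a i ≤ 1)
    (hb0 : ∀ i, 0 ≤ b i) (hbk : ∀ i, b i ≤ k)
    (x y : ℕ → ℝ)
    (hxnn : ∀ i, 0 ≤ x i) (hynn : ∀ i, 0 ≤ y i)
    (hx0 : x 0 = 0) (hy0 : y 0 = fOPT)
    (hxrec : ∀ i, 1 ≤ i → i ≤ k →
      x i ≥ (1 - a (i - 1) / k) * x (i - 1) + (a (i - 1) / k) * y (i - 1))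
    (hyrec : ∀ i, 1 ≤ i → i ≤ k → y i ≥ (1 - b i / k) * y (i - 1)) :
    ∀ i, 1 ≤ i → i ≤ k →
      x i ≥ (∏ j ∈ Finset.Icc 1 (i - 1), min (1 - b j / k) (1 - a j / k)) *
        (∑ j ∈ Finset.range i, a j / k) * fOPT := by
  have hk0 : (0:ℝ) < k := by exact_mod_cast hk
  have hk1 : (1:ℝ) ≤ k := by exact_mod_cast hk
  have hbfac : ∀ j, 0 ≤ 1 - b j / k := by
    intro j
    have := (div_le_one hk0).mpr (hbk j)
    linarith
  have hafac : ∀ j, 0 ≤ 1 - a j / k := by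
    intro j
    have : a j / k ≤ 1 := (div_le_one hk0).mpr ((ha1 j).trans hk1)
    linarith
  have hmin : ∀ j, 0 ≤ min (1 - b j / k) (1 - a j / k) :=
    fun j => le_min (hbfac j) (hafac j)
  have hP : ∀ i, 0 ≤ ∏ j ∈ Finset.Icc 1 i, min (1 - b j / k) (1 - a j / k) :=
    fun i => Finset.prod_nonneg fun j _ => hmin j
  have hQP : ∀ i, (∏ j ∈ Finset.Icc 1 i, min (1 - b j / k) (1 - a j / k)) ≤
      ∏ j ∈ Finset.Icc 1 i, (1 - b j / k) :=
    fun i => Finset.prod_le_prod (fun j _ => hmin j) (fun j _ => min_le_left _ _)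
  have hy : ∀ i, i ≤ k → y i ≥ (∏ j ∈ Finset.Icc 1 i, (1 - b j / k)) * fOPT := by
    intro i
    induction i with
    | zero => intro _; simp [hy0]
    | succ n ih =>
      intro hkle
      have hn := ih (Nat.le_of_succ_le hkle)
      have hr := hyrec (n + 1) (Nat.succ_le_succ (Nat.zero_le n)) hkle
      simp only [Nat.add_sub_cancel] at hr
      rw [Finset.prod_Icc_succ_top (Nat.succ_le_succ (Nat.zero_le n))]
      calc y (n + 1) ≥ (1 - b (n + 1) / k) * y n := hr
        _ ≥ (1 - b (n + 1) / k) * ((∏ j ∈ Finset.Icc 1 n, (1 - b j / k)) * fOPT) :=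
          mul_le_mul_of_nonneg_left hn (hbfac _)
        _ = (∏ j ∈ Finset.Icc 1 n, (1 - b j / k)) * (1 - b (n + 1) / k) * fOPT := by ring
  intro i hi1
  induction i, hi1 using Nat.le_induction with
  | base =>
    intro hik
    have hr := hxrec 1 le_rfl hik
    simp only [Nat.sub_self, hx0, hy0, mul_zero, zero_add] at hr
    simpa using hr
  | succ n hn ih =>
    intro hik
    obtain ⟨m, rfl⟩ : ∃ m, n = m + 1 := ⟨n - 1, (Nat.succ_pred_eq_of_pos hn).symm⟩
    have hmk : m + 1 ≤ k := Nat.le_of_succ_le hik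
    have ihx := ih hmk
    simp only [Nat.add_sub_cancel] at ihx
    set P := ∏ j ∈ Finset.Icc 1 m, min (1 - b j / k) (1 - a j / k) with hPdef
    set m1 := min (1 - b (m + 1) / k) (1 - a (m + 1) / k) with hm1def
    set S := ∑ j ∈ Finset.range (m + 1), a j / k with hSdef
    set A := a (m + 1) / k with hAdef
    have hA0 : 0 ≤ A := div_nonneg (ha0 _) hk0.le
    have hy' := hy (m + 1) hmk
    have hr := hxrec (m + 1 + 1) (by omega) hik
    simp only [Nat.add_sub_cancel] at hr
    have hQP' : P * m1 ≤ ∏ j ∈ Finset.Icc 1 (m + 1), (1 - b j / k) := by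
      calc P * m1 = ∏ j ∈ Finset.Icc 1 (m + 1), min (1 - b j / k) (1 - a j / k) := by
            rw [Finset.prod_Icc_succ_top (Nat.succ_le_succ (Nat.zero_le m))]
        _ ≤ _ := hQP (m + 1)
    have t1 : (1 - A) * x (m + 1) ≥ m1 * (P * S * fOPT) :=
      calc (1 - A) * x (m + 1) ≥ m1 * x (m + 1) :=
            mul_le_mul_of_nonneg_right (min_le_right _ _) (hxnn _)
        _ ≥ m1 * (P * S * fOPT) := mul_le_mul_of_nonneg_left ihx (hmin _)
    have t2 : A * y (m + 1) ≥ A * (P * m1 * fOPT) :=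
      calc A * y (m + 1) ≥ A * ((∏ j ∈ Finset.Icc 1 (m + 1), (1 - b j / k)) * fOPT) :=
            mul_le_mul_of_nonneg_left hy' hA0
        _ ≥ A * (P * m1 * fOPT) :=
            mul_le_mul_of_nonneg_left (mul_le_mul_of_nonneg_right hQP' hfOPT) hA0
    have hgoal : (m + 1 + 1) - 1 = m + 1 := rfl
    rw [hgoal, Finset.prod_Icc_succ_top (Nat.succ_le_succ (Nat.zero_le m)),
      Finset.sum_range_succ]
    have : x (m + 1 + 1) ≥ m1 * (P * S * fOPT) + A * (P * m1 * fOPT) := by linarith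
    calc x (m + 1 + 1) ≥ m1 * (P * S * fOPT) + A * (P * m1 * fOPT) := this
      _ = P * m1 * (S + A) * fOPT := by ring
end
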